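/- arXiv:0909.3691 — 5 statements merged into one kernel-verified Lean document; each statement's English description precedes it below -/
import Mathlib

section
/- If Φ is a t×n binary matrix with constant column weight w such that every pair of distinct columns has dot product at most λ, then n ≤ C(t, λ+1) / C(w, λ+1). -/
/-- Dot product of columns `j` and `k` of `Φ`. -/
def colDot {t n : ℕ} (Φ : Fin t → Fin n → Bool) (j k : Fin n) : ℕ :=
  (Finset.univ.filter fun i => Φ i j = true ∧ Φ i k = true).card

/-- Kautz–Singleton bound: `n ≤ C(t, λ+1) / C(w, λ+1)`. -/
theorem kautz_singleton_bound {t n w lam : ℕ} (Φ : Fin t → Fin n → Bool)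
    (hw : ∀ j : Fin n, (Finset.univ.filter fun i => Φ i j = true).card = w)
    (hlam : ∀ j k : Fin n, j ≠ k → colDot Φ j k ≤ lam) :
    n * w.choose (lam + 1) ≤ t.choose (lam + 1) := by
  classical
  set S : Fin n → Finset (Fin t) := fun j => Finset.univ.filter fun i => Φ i j = true with hS
  have hdisj : ∀ j ∈ (Finset.univ : Finset (Fin n)), ∀ k ∈ (Finset.univ : Finset (Fin n)),
      j ≠ k → Disjoint ((S j).powersetCard (lam+1)) ((S k).powersetCard (lam+1)) := by
    intro j _ k _ hjk
    rw [Finset.disjoint_left]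
    intro A hA hA'
    rw [Finset.mem_powersetCard] at hA hA'
    have hsub : A ⊆ S j ∩ S k := Finset.subset_inter hA.1 hA'.1
    have hc : A.card ≤ (S j ∩ S k).card := Finset.card_le_card hsub
    have heq : (S j ∩ S k).card = colDot Φ j k := by
      unfold colDot
      congr 1
      ext i
      simp [hS, Finset.mem_inter, Finset.mem_filter]
    have := hlam j k hjk
    omega
  have hsub : (Finset.univ.biUnion fun j => (S j).powersetCard (lam+1)) ⊆
      (Finset.univ : Finset (Fin t)).powersetCard (lam+1) := by
    intro A hA
    rw [Finset.mem_biUnion] at hA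
    obtain ⟨j, _, h2⟩ := hA
    rw [Finset.mem_powersetCard] at h2 ⊢
    exact ⟨Finset.subset_univ _, h2.2⟩
  have hcard := Finset.card_le_card hsub
  rw [Finset.card_biUnion hdisj, Finset.card_powersetCard, Finset.card_univ,
    Fintype.card_fin] at hcard
  calc n * w.choose (lam+1)
      = ∑ j : Fin n, w.choose (lam+1) := by
        rw [Finset.sum_const, Finset.card_univ, Fintype.card_fin, smul_eq_mul]
    _ = ∑ j : Fin n, ((S j).powersetCard (lam+1)).card := by
        refine Finset.sum_congr rfl fun j _ => ?_
        rw [Finset.card_powersetCard, hw j]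
    _ ≤ t.choose (lam+1) := hcard
end

section
/- If Φ is a t×n binary matrix with constant column weight w ≥ 2 in which every pair of distinct columns has dot product at most 1, then t ≥ sqrt(w(w−1)n). -/
lemma two_mul_choose_two (m : ℕ) : 2 * m.choose 2 = m * (m - 1) := by
  rw [Nat.choose_two_right]
  have h : Even (m * (m - 1)) := by
    rcases Nat.even_or_odd m with h | h
    · exact h.mul_right _
    · cases m with
      | zero => simp
      | succ k =>
        have : Even k := by rcases Nat.even_or_odd k with h' | h'; · exact h'
                            · exact absurd (by simpa using h'.add_one) (by simpa using h)
        simpa [Nat.succ_sub_one] using this.mul_left (k+1)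
  obtain ⟨k, hk⟩ := h
  omega

/-- Lower bound on the number of rows of a light-weight design:
`t ≥ √(w(w-1)n)`. -/
theorem rows_lower_bound {t n w : ℕ} (Φ : Fin t → Fin n → Bool)
    (hw2 : 2 ≤ w)
    (hw : ∀ j : Fin n, (Finset.univ.filter fun i => Φ i j = true).card = w)
    (hlam : ∀ j k : Fin n, j ≠ k → colDot Φ j k ≤ 1) :
    Real.sqrt (w * (w - 1) * n) ≤ t := by
  set S : Fin n → Finset (Fin t) := fun j => Finset.univ.filter fun i => Φ i j = true with hS
  set T : Fin n → Finset (Finset (Fin t)) := fun j => (S j).powersetCard 2 with hT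
  have hinter : ∀ j k : Fin n, j ≠ k → (S j ∩ S k).card ≤ 1 := by
    intro j k hjk
    have : S j ∩ S k = Finset.univ.filter fun i => Φ i j = true ∧ Φ i k = true := by
      ext i; simp [hS, and_assoc]
    rw [this]
    exact hlam j k hjk
  have hdisj : ∀ j ∈ (Finset.univ : Finset (Fin n)), ∀ k ∈ (Finset.univ : Finset (Fin n)),
      j ≠ k → Disjoint (T j) (T k) := by
    intro j _ k _ hjk
    rw [Finset.disjoint_left]
    intro s hsj hsk
    rw [hT, Finset.mem_powersetCard] at hsj hsk
    have hsub : s ⊆ S j ∩ S k := Finset.subset_inter hsj.1 hsk.1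
    have := Finset.card_le_card hsub
    have := hinter j k hjk
    omega
  have hcard : ∀ j : Fin n, (T j).card = w.choose 2 := by
    intro j
    rw [hT, Finset.card_powersetCard, hw j]
  have hsum : n * w.choose 2 ≤ t.choose 2 := by
    have h1 : (Finset.univ.biUnion T).card = n * w.choose 2 := by
      rw [Finset.card_biUnion hdisj]
      simp [hcard, Finset.card_univ]
    have h2 : Finset.univ.biUnion T ⊆ (Finset.univ : Finset (Fin t)).powersetCard 2 := by
      intro s hs
      rw [Finset.mem_biUnion] at hs
      obtain ⟨j, _, hsj⟩ := hs
      rw [hT, Finset.mem_powersetCard] at hsj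
      rw [Finset.mem_powersetCard]
      exact ⟨Finset.subset_univ s, hsj.2⟩
    have := Finset.card_le_card h2
    rw [h1, Finset.card_powersetCard, Finset.card_univ, Fintype.card_fin] at this
    exact this
  have hnat : w * (w - 1) * n ≤ t * t := by
    have h1 : 2 * (n * w.choose 2) ≤ 2 * t.choose 2 := by omega
    rw [two_mul_choose_two] at h1
    have h2 : 2 * (n * w.choose 2) = w * (w - 1) * n := by
      rw [← Nat.mul_assoc, Nat.mul_comm 2 n, Nat.mul_assoc, two_mul_choose_two]; ring
    have : t * (t - 1) ≤ t * t := Nat.mul_le_mul_left t (Nat.sub_le t 1)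
    omega
  have hreal : (w : ℝ) * (w - 1) * n ≤ (t : ℝ) ^ 2 := by
    have : ((w * (w - 1) * n : ℕ) : ℝ) ≤ ((t * t : ℕ) : ℝ) := by exact_mod_cast hnat
    push_cast [Nat.cast_sub (by omega : 1 ≤ w)] at this
    nlinarith [this]
  calc Real.sqrt (w * (w - 1) * n) ≤ Real.sqrt ((t : ℝ) ^ 2) := Real.sqrt_le_sqrt hreal
    _ = t := by rw [Real.sqrt_sq (by positivity)]
end

section
/- Given n specimens and w pairwise query windows q_1,…,q_w satisfying lcm(q_i,q_j) ≥ n for all i ≠ j, the light Chinese design matrix (the vertical concatenation of the w submatrices where submatrix i has a 1 in entry (r, x) iff x ≡ r mod q_i) has the property that any two distinct columns have dot product at most 1. -/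
/-! Two rows of the same block are disjoint, so two rows sharing both columns `x` and `y` lie in
different blocks `i ≠ j`; then `x ≡ y` modulo `q i` and `q j`, hence modulo their lcm `≥ n`,
which forces `x = y`. -/

/-- The light Chinese design: row `(i, r)` and column `x` (specimen `x+1 ∈ {1,…,n}`)
has a `1` iff `x + 1 ≡ r (mod q i)`. -/
def chineseDesign (n w : ℕ) (q : Fin w → ℕ) : (Σ i : Fin w, Fin (q i)) → Fin n → Bool :=
  fun p x => decide ((x.val + 1) % q p.1 = p.2.val)

section

variable {n w : ℕ} {q : Fin w → ℕ}

theorem chineseDesign_eq_true_iff {p : Σ i : Fin w, Fin (q i)} {x : Fin n} :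
    chineseDesign n w q p x = true ↔ (x.val + 1) % q p.1 = p.2.val :=
  decide_eq_true_iff

theorem chineseDesign_row_eq_of_fst_eq {p p' : Σ i : Fin w, Fin (q i)} {x : Fin n}
    (hfst : p.1 = p'.1) (hp : chineseDesign n w q p x = true)
    (hp' : chineseDesign n w q p' x = true) : p = p' := by
  obtain ⟨i, r⟩ := p
  obtain ⟨i', r'⟩ := p'
  obtain rfl : i = i' := hfst
  rw [chineseDesign_eq_true_iff] at hp hp'
  exact congrArg _ (Fin.ext (hp.symm.trans hp'))

theorem modEq_of_chineseDesign {p : Σ i : Fin w, Fin (q i)} {x y : Fin n}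
    (hx : chineseDesign n w q p x = true) (hy : chineseDesign n w q p y = true) :
    x.val ≡ y.val [MOD q p.1] := by
  rw [chineseDesign_eq_true_iff] at hx hy
  exact Nat.ModEq.add_right_cancel' 1 (hx.trans hy.symm)

end

theorem chineseDesign_colDot_le_one_general (n w : ℕ) (q : Fin w → ℕ)
    (hlcm : ∀ i j : Fin w, i ≠ j → n ≤ Nat.lcm (q i) (q j))
    (x y : Fin n) (hxy : x ≠ y) :
    (Finset.univ.filter fun p : Σ i : Fin w, Fin (q i) =>
      chineseDesign n w q p x = true ∧ chineseDesign n w q p y = true).card ≤ 1 := by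
  refine Finset.card_le_one.2 fun p hp p' hp' => ?_
  simp only [Finset.mem_filter, Finset.mem_univ, true_and] at hp hp'
  by_contra hne
  have hblocks : p.1 ≠ p'.1 := fun h => hne (chineseDesign_row_eq_of_fst_eq h hp.1 hp'.1)
  have hn := hlcm _ _ hblocks
  have hmod : x.val ≡ y.val [MOD Nat.lcm (q p.1) (q p'.1)] :=
    Nat.mod_lcm (modEq_of_chineseDesign hp.1 hp.2) (modEq_of_chineseDesign hp'.1 hp'.2)
  exact hxy (Fin.ext (hmod.eq_of_lt_of_lt (x.2.trans_le hn) (y.2.trans_le hn)))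

/-- In a light Chinese design with `lcm (q i) (q j) ≥ n` for `i ≠ j`,
any two distinct columns have dot product at most `1`. -/
theorem chineseDesign_colDot_le_one (n w : ℕ) (q : Fin w → ℕ)
    (hq : ∀ i, 0 < q i)
    (hlcm : ∀ i j : Fin w, i ≠ j → n ≤ Nat.lcm (q i) (q j))
    (x y : Fin n) (hxy : x ≠ y) :
    (Finset.univ.filter fun p : Σ i : Fin w, Fin (q i) =>
      chineseDesign n w q p x = true ∧ chineseDesign n w q p y = true).card ≤ 1 :=
  chineseDesign_colDot_le_one_general n w q hlcm x y hxy
end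

section
/- If Q is an optimal (sum-minimizing) set of w pairwise-coprime integers all greater than κ, then max(Q) is at most the w-th smallest prime exceeding κ. -/
/-- A valid solution: a set of `w` pairwise-coprime positive integers, all greater than `κ`. -/
def ValidSolution (κ w : ℕ) (R : Finset ℕ) : Prop :=
  R.card = w ∧ (∀ x ∈ R, κ < x) ∧ (R : Set ℕ).Pairwise Nat.Coprime

lemma replace_lemma (κ w p y : ℕ) (Q : Finset ℕ) (hQ : ValidSolution κ w Q)
    (hy : y ∈ Q) (hp : κ < p) (hκ : 1 ≤ κ) (hpy : p < y)
    (hcop : ∀ z ∈ Q, z ≠ y → Nat.Coprime p z) :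
    ValidSolution κ w (insert p (Q.erase y)) ∧
      ∑ x ∈ insert p (Q.erase y), x < ∑ x ∈ Q, x := by
  obtain ⟨hcard, hgt, hpair⟩ := hQ
  have hp2 : 2 ≤ p := by omega
  have hpnot : p ∉ Q.erase y := by
    intro hmem
    have h1 : p ≠ y := (Finset.mem_erase.mp hmem).1
    have h2 : p ∈ Q := (Finset.mem_erase.mp hmem).2
    have := hcop p h2 h1
    simp [Nat.Coprime, Nat.gcd_self] at this
    omega
  have hsum : y + ∑ x ∈ Q.erase y, x = ∑ x ∈ Q, x := Finset.add_sum_erase Q id hy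
  refine ⟨⟨?_, ?_, ?_⟩, ?_⟩
  · rw [Finset.card_insert_of_notMem hpnot, Finset.card_erase_of_mem hy, hcard]
    have : 1 ≤ w := by
      rw [← hcard]; exact Finset.card_pos.mpr ⟨y, hy⟩
    omega
  · intro x hx
    rcases Finset.mem_insert.mp hx with rfl | hx
    · exact hp
    · exact hgt x (Finset.mem_erase.mp hx).2
  · intro a ha b hb hab
    simp only [Finset.coe_insert, Set.mem_insert_iff, Finset.coe_erase, Set.mem_diff,
      Finset.mem_coe, Set.mem_singleton_iff] at ha hb
    rcases ha with rfl | ha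
    · rcases hb with rfl | hb
      · exact absurd rfl hab
      · exact hcop b hb.1 hb.2
    · rcases hb with rfl | hb
      · exact (hcop a ha.1 ha.2).symm
      · exact hpair ha.1 hb.1 hab
  · rw [Finset.sum_insert hpnot]
    omega

/-- For an optimal (sum-minimizing) valid solution `Q`, the maximum of `Q` is at most the
maximum of `Q₀`, the set of the `w` smallest primes exceeding `κ`. -/
theorem optimal_max_le_prime_max (κ w : ℕ) (hκ : 1 ≤ κ) (hw : 1 ≤ w)
    (Q Q₀ : Finset ℕ)
    (hQ : ValidSolution κ w Q)
    (hopt : ∀ R : Finset ℕ, ValidSolution κ w R → ∑ x ∈ Q, x ≤ ∑ x ∈ R, x)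
    (hQ₀card : Q₀.card = w)
    (hQ₀prime : ∀ p ∈ Q₀, p.Prime ∧ κ < p)
    (hQne : Q.Nonempty) (hQ₀ne : Q₀.Nonempty)
    (hsmallest : ∀ p : ℕ, p.Prime → κ < p → p ≤ Q₀.max' hQ₀ne → p ∈ Q₀) :
    Q.max' hQne ≤ Q₀.max' hQ₀ne := by
  by_contra hlt
  push_neg at hlt
  obtain ⟨hcard, hgt, hpair⟩ := hQ
  -- there is a prime p ∈ Q₀ with p ∉ Q
  have hnotsub : ¬ Q₀ ⊆ Q := by
    intro hsub
    have heq : Q₀ = Q := Finset.eq_of_subset_of_card_le hsub (by omega)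
    subst heq
    exact absurd hlt (lt_irrefl _)
  obtain ⟨p, hpQ₀, hpQ⟩ := Finset.not_subset.mp hnotsub
  obtain ⟨hpprime, hpκ⟩ := hQ₀prime p hpQ₀
  have hpmax : p ≤ Q₀.max' hQ₀ne := Finset.le_max' _ _ hpQ₀
  -- at most one element of Q is not coprime to p
  by_cases hex : ∃ y ∈ Q, ¬ Nat.Coprime p y
  · obtain ⟨y, hyQ, hycop⟩ := hex
    have hdvd : p ∣ y := by
      by_contra hnd
      exact hycop ((Nat.Prime.coprime_iff_not_dvd hpprime).mpr hnd)
    have hpy : p < y := by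
      have hle : p ≤ y := Nat.le_of_dvd (by have := hgt y hyQ; omega) hdvd
      rcases lt_or_eq_of_le hle with h | h
      · exact h
      · exact absurd (h ▸ hyQ) hpQ
    have hcop : ∀ z ∈ Q, z ≠ y → Nat.Coprime p z := by
      intro z hz hzy
      rw [Nat.Prime.coprime_iff_not_dvd hpprime]
      intro hdz
      have hc : Nat.Coprime z y := hpair hz hyQ hzy
      have : p ∣ Nat.gcd z y := Nat.dvd_gcd hdz hdvd
      rw [hc] at this
      have hle := Nat.le_of_dvd one_pos this
      have := hpprime.two_le
      omega
    obtain ⟨hval, hsum⟩ := replace_lemma κ w p y Q ⟨hcard, hgt, hpair⟩ hyQ hpκ hκ hpy hcop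
    have := hopt _ hval
    omega
  · push_neg at hex
    set y := Q.max' hQne with hy
    have hyQ : y ∈ Q := Finset.max'_mem Q hQne
    have hpy : p < y := lt_of_le_of_lt hpmax hlt
    obtain ⟨hval, hsum⟩ := replace_lemma κ w p y Q ⟨hcard, hgt, hpair⟩ hyQ hpκ hκ hpy
      (fun z hz _ => hex z hz)
    have := hopt _ hval
    omega
end

section
/- The set of k-pseudo-primes coincides with the set of primes for all elements larger than k²: if i > k² then i is a k-pseudo-prime if and only if i is prime. -/
/-- `i` is a `k`-pseudo-prime: `i > k` and no smaller `k`-pseudo-prime divides `i`. -/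
def PseudoPrime (k : ℕ) : ℕ → Prop
  | i => k < i ∧ ∀ j : ℕ, j < i → PseudoPrime k j → ¬ j ∣ i
  termination_by i => i

lemma pseudoPrime_of_prime (k p : ℕ) (hk : 1 ≤ k) (hp : p.Prime) (hkp : k < p) :
    PseudoPrime k p := by
  rw [PseudoPrime]
  refine ⟨hkp, fun j hj hpj hdvd => ?_⟩
  have hjk : k < j := by rw [PseudoPrime] at hpj; exact hpj.1
  rcases hp.eq_one_or_self_of_dvd j hdvd with h | h <;> omega

/-- For `i > k²`, `i` is a `k`-pseudo-prime iff `i` is prime. -/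
theorem pseudoPrime_iff_prime_of_gt_sq (k : ℕ) (hk : 1 ≤ k) (i : ℕ) (hi : k ^ 2 < i) :
    PseudoPrime k i ↔ i.Prime := by
  have hk2 : 1 ≤ k ^ 2 := Nat.one_le_pow _ _ hk
  constructor
  · intro hpp
    by_contra hnp
    rw [PseudoPrime] at hpp
    obtain ⟨hki, hmin⟩ := hpp
    have hi1 : 1 < i := by omega
    set p := i.minFac with hpdef
    have hpp' : p.Prime := Nat.minFac_prime (by omega)
    have hpd : p ∣ i := Nat.minFac_dvd i
    have hp1 : 1 < p := hpp'.one_lt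
    have hpi : p < i := by
      rcases Nat.lt_or_ge p i with h | h
      · exact h
      · have : p = i := le_antisymm (Nat.le_of_dvd (by omega) hpd) h
        exact absurd (this ▸ hpp') hnp
    have hq : (i / p) ∣ i := Nat.div_dvd_of_dvd hpd
    have hq1 : 1 < i / p := by
      have := Nat.div_mul_cancel hpd
      rcases Nat.lt_or_ge 1 (i / p) with h | h
      · exact h
      · interval_cases h' : (i / p) <;> omega
    have hqk : k < i / p := by
      by_contra hle
      push_neg at hle
      have hple : p ≤ i / p := Nat.minFac_le_of_dvd hq1 hq
      have : i = p * (i / p) := (Nat.mul_div_cancel' hpd).symm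
      have : i ≤ k * k := by
        calc i = p * (i / p) := this
        _ ≤ k * k := Nat.mul_le_mul (hple.trans hle) hle
      nlinarith
    have hqi : i / p < i := Nat.div_lt_self (by omega) hp1
    have hex : ∃ d, d ∣ i ∧ k < d ∧ d < i := ⟨i / p, hq, hqk, hqi⟩
    classical
    set m := Nat.find hex with hmdef
    have hm : m ∣ i ∧ k < m ∧ m < i := Nat.find_spec hex
    have hmps : PseudoPrime k m := by
      rw [PseudoPrime]
      refine ⟨hm.2.1, fun j hjm hpj hdvd => ?_⟩
      have hjk : k < j := by rw [PseudoPrime] at hpj; exact hpj.1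
      have : j ∣ i := hdvd.trans hm.1
      exact Nat.find_min hex hjm ⟨this, hjk, lt_trans hjm hm.2.2⟩
    exact hmin m hm.2.2 hmps hm.1
  · intro hp
    exact pseudoPrime_of_prime k i hk hp (by nlinarith)
end
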